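/- If X, Y, Z, W are random variables on a finite probability space with H(Z|X)=0 and H(Z|Y)=0, then the conditional mutual information satisfies I(X;Y|W) ≥ H(Z|W). -/

import Mathlib

open Finset

/-- Probability mass of the event `X = a` under weights `p`. -/
noncomputable def pmass {Ω α : Type} [Fintype Ω] [DecidableEq α]
    (p : Ω → ℝ) (X : Ω → α) (a : α) : ℝ :=
  ∑ ω, if X ω = a then p ω else 0

/-- Shannon entropy (base 2) of a random variable `X` on a finite space. -/
noncomputable def ent {Ω α : Type} [Fintype Ω] [Fintype α] [DecidableEq α]
    (p : Ω → ℝ) (X : Ω → α) : ℝ :=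
  ∑ a, -(pmass p X a * Real.logb 2 (pmass p X a))

/-- Conditional Shannon entropy `H(X|Y) = H(X,Y) - H(Y)`. -/
noncomputable def condEnt {Ω α β : Type} [Fintype Ω] [Fintype α] [Fintype β]
    [DecidableEq α] [DecidableEq β] (p : Ω → ℝ) (X : Ω → α) (Y : Ω → β) : ℝ :=
  ent p (fun ω => (X ω, Y ω)) - ent p Y

/-- Conditional mutual information `I(X;Y|W) = H(X|W) + H(Y|W) - H(X,Y|W)`. -/
noncomputable def condMI {Ω α β γ : Type} [Fintype Ω] [Fintype α] [Fintype β] [Fintype γ]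
    [DecidableEq α] [DecidableEq β] [DecidableEq γ]
    (p : Ω → ℝ) (X : Ω → α) (Y : Ω → β) (W : Ω → γ) : ℝ :=
  condEnt p X W + condEnt p Y W - condEnt p (fun ω => (X ω, Y ω)) W

/-!
All the work is in Shannon's inequality `H(S) + H(X,Y,S) ≤ H(X,S) + H(Y,S)`, i.e. `I(X;Y|S) ≥ 0`.
Splitting the weight `p` along the fibres of `S` reduces it to `H(X,Y) ≤ H(X) + H(Y)` for
unnormalised weights, which is a sum of the pointwise bounds `log t ≥ 1 - 1/t`.
Because `H(Z|X) = 0`, the inequality with `S = X` gives `H(X,Z,W) ≤ H(X,W)`, likewise for `Y`,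
and `H(X,Y,W) ≤ H(X,Y,Z,W)`; hence `I(X;Y|W) ≥ I(X;Y|Z,W) + H(Z|W) ≥ H(Z|W)`.
-/

open Real

namespace Real

lemma negMulLog_sum {ι : Type*} (s : Finset ι) (f : ι → ℝ) :
    negMulLog (∑ i ∈ s, f i) = ∑ i ∈ s, -f i * log (∑ j ∈ s, f j) := by
  simp only [negMulLog, neg_mul, Finset.sum_mul, Finset.sum_neg_distrib]

lemma negMulLog_sum_le {ι : Type*} (s : Finset ι) {f : ι → ℝ} (hf : ∀ i ∈ s, 0 ≤ f i) :
    negMulLog (∑ i ∈ s, f i) ≤ ∑ i ∈ s, negMulLog (f i) := by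
  rw [negMulLog_sum]
  refine Finset.sum_le_sum fun i hi => ?_
  rcases (hf i hi).eq_or_lt with h0 | hpos
  · simp [← h0]
  · have : log (f i) ≤ log (∑ j ∈ s, f j) :=
      log_le_log hpos (Finset.single_le_sum hf hi)
    rw [negMulLog]
    nlinarith

lemma sub_mul_div_le_mul_log {q a b Q : ℝ} (hq : 0 ≤ q) (ha : q ≤ a) (hb : q ≤ b) (hQ : q ≤ Q) :
    q - a * b / Q ≤ q * (log q + log Q - log a - log b) := by
  rcases hq.eq_or_lt with h0 | hpos
  · subst h0
    have : 0 ≤ a * b / Q := div_nonneg (mul_nonneg ha hb) hQ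
    simpa using this
  · have ha' : 0 < a := hpos.trans_le ha
    have hb' : 0 < b := hpos.trans_le hb
    have hQ' : 0 < Q := hpos.trans_le hQ
    have key := one_sub_inv_le_log_of_pos (show 0 < q * Q / (a * b) by positivity)
    rw [log_div (by positivity) (by positivity), log_mul hpos.ne' hQ'.ne',
      log_mul ha'.ne' hb'.ne', inv_div] at key
    calc q - a * b / Q = q * (1 - a * b / (q * Q)) := by field_simp
      _ ≤ q * (log q + log Q - (log a + log b)) := mul_le_mul_of_nonneg_left key hq
      _ = _ := by ring

lemma negMulLog_sum_sum_add_sum_sum_le {α β : Type*} [Fintype α] [Fintype β] {q : α → β → ℝ}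
    (hq : ∀ a b, 0 ≤ q a b) :
    negMulLog (∑ a, ∑ b, q a b) + ∑ a, ∑ b, negMulLog (q a b)
      ≤ ∑ a, negMulLog (∑ b, q a b) + ∑ b, negMulLog (∑ a, q a b) := by
  set r : α → ℝ := fun a => ∑ b, q a b
  set c : β → ℝ := fun b => ∑ a, q a b
  set Q := ∑ a, ∑ b, q a b
  have hQr : Q = ∑ a, r a := rfl
  have hQc : Q = ∑ b, c b := Finset.sum_comm
  have hr : ∀ a b, q a b ≤ r a := fun a b => Finset.single_le_sum (fun b _ => hq a b) (mem_univ b)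
  have hc : ∀ a b, q a b ≤ c b := fun a b => Finset.single_le_sum (fun a _ => hq a b) (mem_univ a)
  have hQ : ∀ a b, q a b ≤ Q := fun a b =>
    (hr a b).trans (Finset.single_le_sum (fun a _ => Finset.sum_nonneg fun b _ => hq a b) (mem_univ a))
  have gap : ∑ a, ∑ b, (q a b - r a * c b / Q) = 0 := by
    simp only [Finset.sum_sub_distrib, ← Finset.mul_sum, ← Finset.sum_div, ← Finset.sum_mul,
      ← hQc, ← hQr]
    rw [mul_self_div_self, sub_self]
  have expand : ∑ a, negMulLog (r a) + ∑ b, negMulLog (c b) - negMulLog Q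
      - ∑ a, ∑ b, negMulLog (q a b)
      = ∑ a, ∑ b, q a b * (log (q a b) + log Q - log (r a) - log (c b)) := by
    have eR : ∑ a, negMulLog (r a) = ∑ a, ∑ b, -q a b * log (r a) := by
      simp only [r, negMulLog_sum]
    have eC : ∑ b, negMulLog (c b) = ∑ a, ∑ b, -q a b * log (c b) := by
      simp only [c, negMulLog_sum]
      exact Finset.sum_comm
    have eQ : negMulLog Q = ∑ a, ∑ b, -q a b * log Q := by
      simp only [negMulLog, neg_mul, Finset.sum_neg_distrib, ← Finset.sum_mul]
      rfl
    rw [eR, eC, eQ]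
    simp only [← Finset.sum_sub_distrib, ← Finset.sum_add_distrib]
    refine Finset.sum_congr rfl fun a _ => Finset.sum_congr rfl fun b _ => ?_
    rw [negMulLog]
    ring
  have := Finset.sum_le_sum fun a (_ : a ∈ univ) => Finset.sum_le_sum fun b (_ : b ∈ univ) =>
    sub_mul_div_le_mul_log (hq a b) (hr a b) (hc a b) (hQ a b)
  linarith

end Real

section Entropy

variable {Ω α β : Type}

def restrictFiber [DecidableEq β] (p : Ω → ℝ) (Y : Ω → β) (b : β) : Ω → ℝ :=
  fun ω => if Y ω = b then p ω else 0

lemma restrictFiber_nonneg [DecidableEq β] {p : Ω → ℝ} (hp : ∀ ω, 0 ≤ p ω) (Y : Ω → β) (b : β)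
    (ω : Ω) : 0 ≤ restrictFiber p Y b ω := by
  unfold restrictFiber
  split_ifs
  exacts [hp ω, le_rfl]

lemma pmass_nonneg [Fintype Ω] [DecidableEq α] {p : Ω → ℝ} (hp : ∀ ω, 0 ≤ p ω) (X : Ω → α)
    (a : α) : 0 ≤ pmass p X a :=
  Finset.sum_nonneg fun ω _ => restrictFiber_nonneg hp X a ω

lemma sum_pmass [Fintype Ω] [Fintype α] [DecidableEq α] (p : Ω → ℝ) (X : Ω → α) :
    ∑ a, pmass p X a = ∑ ω, p ω := by
  unfold pmass
  rw [Finset.sum_comm]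
  simp

lemma pmass_pair_eq_pmass_restrictFiber [Fintype Ω] [DecidableEq α] [DecidableEq β]
    (p : Ω → ℝ) (X : Ω → α) (Y : Ω → β) (a : α) (b : β) :
    pmass p (fun ω => (X ω, Y ω)) (a, b) = pmass (restrictFiber p Y b) X a := by
  simp only [pmass, restrictFiber, Prod.mk.injEq, ite_and]

lemma sum_pmass_pair_left [Fintype Ω] [Fintype α] [DecidableEq α] [DecidableEq β]
    (p : Ω → ℝ) (X : Ω → α) (Y : Ω → β) (b : β) :
    ∑ a, pmass p (fun ω => (X ω, Y ω)) (a, b) = pmass p Y b := by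
  simp only [pmass_pair_eq_pmass_restrictFiber, sum_pmass]
  rfl

lemma sum_pmass_pair_right [Fintype Ω] [Fintype β] [DecidableEq α] [DecidableEq β]
    (p : Ω → ℝ) (X : Ω → α) (Y : Ω → β) (a : α) :
    ∑ b, pmass p (fun ω => (X ω, Y ω)) (a, b) = pmass p X a := by
  rw [← sum_pmass_pair_left p Y X a]
  exact Finset.sum_congr rfl fun b _ => Finset.sum_congr rfl fun ω _ => by
    simp only [Prod.mk.injEq, and_comm]

lemma ent_eq_sum_negMulLog [Fintype Ω] [Fintype α] [DecidableEq α] (p : Ω → ℝ) (X : Ω → α) :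
    ent p X = (∑ a, negMulLog (pmass p X a)) / log 2 := by
  simp only [ent, negMulLog, logb, Finset.sum_div]
  refine Finset.sum_congr rfl fun a _ => by ring

lemma ent_comp_of_injective [Fintype Ω] [Fintype α] [Fintype β] [DecidableEq α] [DecidableEq β]
    (p : Ω → ℝ) (X : Ω → α) {e : α → β} (he : Function.Injective e) :
    ent p (fun ω => e (X ω)) = ent p X := by
  have hmass : ∀ a, pmass p (fun ω => e (X ω)) (e a) = pmass p X a := fun a =>
    Finset.sum_congr rfl fun ω _ => by simp only [he.eq_iff]
  have hzero : ∀ b ∉ Set.range e, pmass p (fun ω => e (X ω)) b = 0 := fun b hb =>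
    Finset.sum_eq_zero fun ω _ => if_neg fun h => hb ⟨X ω, h⟩
  unfold ent
  exact (Fintype.sum_of_injective e he _ _ (fun b hb => by simp [hzero b hb])
    (fun a => by rw [hmass])).symm

lemma ent_pair_comm [Fintype Ω] [Fintype α] [Fintype β] [DecidableEq α] [DecidableEq β]
    (p : Ω → ℝ) (X : Ω → α) (Y : Ω → β) :
    ent p (fun ω => (X ω, Y ω)) = ent p (fun ω => (Y ω, X ω)) :=
  (ent_comp_of_injective p (fun ω => (X ω, Y ω)) Prod.swap_injective).symm

lemma ent_le_ent_pair [Fintype Ω] [Fintype α] [Fintype β] [DecidableEq α] [DecidableEq β]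
    {p : Ω → ℝ} (hp : ∀ ω, 0 ≤ p ω) (X : Ω → α) (Y : Ω → β) :
    ent p Y ≤ ent p (fun ω => (X ω, Y ω)) := by
  rw [ent_eq_sum_negMulLog, ent_eq_sum_negMulLog, Fintype.sum_prod_type, Finset.sum_comm]
  gcongr with b
  rw [← sum_pmass_pair_left p X Y b]
  exact negMulLog_sum_le _ fun a _ => pmass_nonneg hp _ _

lemma ent_comp_le [Fintype Ω] [Fintype α] [Fintype β] [DecidableEq α] [DecidableEq β]
    {p : Ω → ℝ} (hp : ∀ ω, 0 ≤ p ω) (X : Ω → α) (g : α → β) :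
    ent p (fun ω => g (X ω)) ≤ ent p X :=
  (ent_le_ent_pair hp X _).trans_eq
    (ent_comp_of_injective p X (e := fun a => (a, g a)) fun _ _ h => congrArg Prod.fst h)

end Entropy

section Submodularity

variable {Ω α β γ : Type} [Fintype Ω] [Fintype α] [Fintype β] [Fintype γ]
  [DecidableEq α] [DecidableEq β] [DecidableEq γ]

/-- `ent p (fun _ => ())` is `negMulLog (∑ ω, p ω) / log 2`; it vanishes when `p` is a
probability, but not for the restrictions of `p` to the fibres of a conditioning variable. -/
lemma ent_const_add_ent_pair_le {p : Ω → ℝ} (hp : ∀ ω, 0 ≤ p ω) (X : Ω → α) (Y : Ω → β) :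
    ent p (fun _ => ()) + ent p (fun ω => (X ω, Y ω)) ≤ ent p X + ent p Y := by
  have hconst : pmass p (fun _ => ()) () = ∑ a, ∑ b, pmass p (fun ω => (X ω, Y ω)) (a, b) := by
    simp only [sum_pmass_pair_right, sum_pmass]
    simp [pmass]
  simp only [ent_eq_sum_negMulLog, Fintype.sum_unique, Fintype.sum_prod_type, ← add_div]
  have key := negMulLog_sum_sum_add_sum_sum_le
    fun a b => pmass_nonneg hp (fun ω => (X ω, Y ω)) (a, b)
  rw [← hconst] at key
  simp only [sum_pmass_pair_right, sum_pmass_pair_left] at key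
  gcongr

lemma ent_pair_eq_sum_ent_restrictFiber (p : Ω → ℝ) (X : Ω → α) (S : Ω → γ) :
    ent p (fun ω => (X ω, S ω)) = ∑ c, ent (restrictFiber p S c) X := by
  unfold ent
  rw [Fintype.sum_prod_type, Finset.sum_comm]
  simp only [pmass_pair_eq_pmass_restrictFiber]

lemma ent_eq_sum_ent_restrictFiber_const (p : Ω → ℝ) (S : Ω → γ) :
    ent p S = ∑ c, ent (restrictFiber p S c) (fun _ => ()) := by
  simp [ent, pmass, restrictFiber]

lemma ent_submodular {p : Ω → ℝ} (hp : ∀ ω, 0 ≤ p ω) (X : Ω → α) (Y : Ω → β) (S : Ω → γ) :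
    ent p S + ent p (fun ω => ((X ω, Y ω), S ω))
      ≤ ent p (fun ω => (X ω, S ω)) + ent p (fun ω => (Y ω, S ω)) := by
  rw [ent_eq_sum_ent_restrictFiber_const p S,
    ent_pair_eq_sum_ent_restrictFiber p (fun ω => (X ω, Y ω)) S,
    ent_pair_eq_sum_ent_restrictFiber p X S, ent_pair_eq_sum_ent_restrictFiber p Y S,
    ← Finset.sum_add_distrib, ← Finset.sum_add_distrib]
  exact Finset.sum_le_sum fun c _ => ent_const_add_ent_pair_le (restrictFiber_nonneg hp S c) X Y

end Submodularity

lemma ent_pair_le_of_condEnt_eq_zero {Ω α γ δ : Type} [Fintype Ω] [Fintype α] [Fintype γ]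
    [Fintype δ] [DecidableEq α] [DecidableEq γ] [DecidableEq δ] {p : Ω → ℝ}
    (hp : ∀ ω, 0 ≤ p ω) (X : Ω → α) (Z : Ω → γ) (W : Ω → δ) (h : condEnt p Z X = 0) :
    ent p (fun ω => (X ω, (Z ω, W ω))) ≤ ent p (fun ω => (X ω, W ω)) := by
  have := ent_submodular hp Z W X
  rw [condEnt] at h
  rw [ent_pair_comm p X, ent_pair_comm p X]
  linarith

theorem stmt_0_general {Ω α β γ δ : Type} [Fintype Ω] [Fintype α] [Fintype β] [Fintype γ] [Fintype δ]
    [DecidableEq α] [DecidableEq β] [DecidableEq γ] [DecidableEq δ]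
    (p : Ω → ℝ) (hp0 : ∀ ω, 0 ≤ p ω)
    (X : Ω → α) (Y : Ω → β) (Z : Ω → γ) (W : Ω → δ)
    (hZX : condEnt p Z X = 0) (hZY : condEnt p Z Y = 0) :
    condEnt p Z W ≤ condMI p X Y W := by
  have hX := ent_pair_le_of_condEnt_eq_zero hp0 X Z W hZX
  have hY := ent_pair_le_of_condEnt_eq_zero hp0 Y Z W hZY
  have hXY := ent_submodular hp0 X Y fun ω => (Z ω, W ω)
  have hW := ent_comp_le hp0 (fun ω => ((X ω, Y ω), (Z ω, W ω))) fun t => (t.1, t.2.2)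
  unfold condMI condEnt
  linarith

/-- If `H(Z|X) = 0` and `H(Z|Y) = 0` then `I(X;Y|W) ≥ H(Z|W)`. -/
theorem stmt_0 {Ω α β γ δ : Type} [Fintype Ω] [Fintype α] [Fintype β] [Fintype γ] [Fintype δ]
    [DecidableEq α] [DecidableEq β] [DecidableEq γ] [DecidableEq δ]
    (p : Ω → ℝ) (hp0 : ∀ ω, 0 ≤ p ω) (hp1 : ∑ ω, p ω = 1)
    (X : Ω → α) (Y : Ω → β) (Z : Ω → γ) (W : Ω → δ)
    (hZX : condEnt p Z X = 0) (hZY : condEnt p Z Y = 0) :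
    condEnt p Z W ≤ condMI p X Y W :=
  stmt_0_general p hp0 X Y Z W hZX hZY
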